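/- arXiv:2210.07944 — 3 statements merged into one kernel-verified Lean document; each statement's English description precedes it below -/
import Mathlib

section
/- Let (X,d) be a compact metric G-space and let f : X → X be a continuous equivariant map. Then f is chaotic in the sense of G-Li-Yorke if and only if for every positive integer N the map f^N is chaotic in the sense of G-Li-Yorke. -/
/-!
A pair is G-Li-Yorke iff the distances `d(g·fⁿx, g·fⁿy)` can be made arbitrarily small at
infinitely many times and bounded below by a fixed `δ > 0` at infinitely many times, since two
such families of times can be interleaved into a single sequence `(gₙ)`. Both properties pass
to `f^N`: by equivariance `g·f^{n+j}x = f^j(g·fⁿx)`, so moving from a time `n` to a neighbouring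
multiple of `N` only applies some `f^j` with `j ≤ N`, and these finitely many maps are uniformly
equicontinuous on the compact space `X`. The converse is the case `N = 1`.
-/

open Filter Topology

/-- `(x, y)` is a G-Li-Yorke pair for `f`: there is a sequence `(gₙ)` in `G` with
`liminf d(gₙ·fⁿ(x), gₙ·fⁿ(y)) = 0` and `limsup d(gₙ·fⁿ(x), gₙ·fⁿ(y)) > 0`
(distances computed in `[0,∞]` via `edist`, which agrees with the metric `d`). -/
def GLiYorkePair (G : Type*) {X : Type*} [MetricSpace X] [Group G] [MulAction G X]
    (f : X → X) (x y : X) : Prop :=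
  ∃ g : ℕ → G,
    liminf (fun n => edist (g n • f^[n] x) (g n • f^[n] y)) atTop = 0 ∧
    0 < limsup (fun n => edist (g n • f^[n] x) (g n • f^[n] y)) atTop

/-- `f` is chaotic in the sense of G-Li-Yorke: there is an uncountable set all of whose
pairs of distinct points are G-Li-Yorke pairs for `f`. -/
def GLiYorkeChaotic (G : Type*) {X : Type*} [MetricSpace X] [Group G] [MulAction G X]
    (f : X → X) : Prop :=
  ∃ S : Set X, ¬ S.Countable ∧ ∀ x ∈ S, ∀ y ∈ S, x ≠ y → GLiYorkePair G f x y

open ENNReal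

theorem exists_liminf_eq_zero_and_pos_limsup {ι : Type*} (D : ℕ → ι → ℝ≥0∞)
    (hsmall : ∀ ε > 0, ∃ᶠ n in atTop, ∃ i, D n i < ε)
    (hbig : ∃ δ > 0, ∃ᶠ n in atTop, ∃ i, δ ≤ D n i) :
    ∃ h : ℕ → ι, liminf (fun n => D n (h n)) atTop = 0 ∧
      0 < limsup (fun n => D n (h n)) atTop := by
  obtain ⟨δ, hδ, hbig⟩ := hbig
  -- Interleave: along the extracted times, even-indexed values are small, odd-indexed ones big.
  obtain ⟨φ, hφ, hφP⟩ := extraction_forall_of_frequently (P := fun k n =>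
      ∃ i, (Even k → D n i < (k : ℝ≥0∞)⁻¹) ∧ (Odd k → δ ≤ D n i)) fun k => by
    rcases Nat.even_or_odd k with hk | hk
    · exact (hsmall _ (ENNReal.inv_pos.2 (natCast_ne_top k))).mono fun n ⟨i, hi⟩ =>
        ⟨i, fun _ => hi, fun hk' => absurd hk' (Nat.not_odd_iff_even.2 hk)⟩
    · exact hbig.mono fun n ⟨i, hi⟩ =>
        ⟨i, fun hk' => absurd hk (Nat.not_odd_iff_even.2 hk'), fun _ => hi⟩
  choose i hsmall' hbig' using hφP
  have hh : ∀ k, (i ∘ Function.invFun φ) (φ k) = i k := fun k => by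
    simp only [Function.comp_apply, Function.leftInverse_invFun hφ.injective k]
  refine ⟨i ∘ Function.invFun φ,
    le_antisymm (le_of_forall_gt_imp_ge_of_dense fun ε hε => ?_) bot_le, hδ.trans_le ?_⟩
  · refine liminf_le_of_frequently_le' (frequently_atTop.2 fun M => ?_)
    obtain ⟨k, hk⟩ := exists_inv_nat_lt hε.ne'
    refine ⟨φ (2 * max k M), ((by omega : M ≤ 2 * max k M).trans (hφ.id_le _)), ?_⟩
    rw [hh]
    calc D _ (i _) ≤ ((2 * max k M : ℕ) : ℝ≥0∞)⁻¹ := (hsmall' _ (even_two_mul _)).le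
      _ ≤ (k : ℝ≥0∞)⁻¹ := by gcongr; omega
      _ ≤ ε := hk.le
  · refine le_limsup_of_frequently_le' (frequently_atTop.2 fun M =>
      ⟨φ (2 * M + 1), (by omega : M ≤ 2 * M + 1).trans (hφ.id_le _), ?_⟩)
    rw [hh]
    exact hbig' _ (odd_two_mul_add_one M)

theorem exists_pos_forall_edist_iterate_lt {X : Type*} [PseudoEMetricSpace X] [CompactSpace X]
    {f : X → X} (hf : Continuous f) (N : ℕ) {ε : ℝ≥0∞} (hε : 0 < ε) :
    ∃ δ > 0, ∀ u v : X, edist u v < δ → ∀ j ≤ N, edist (f^[j] u) (f^[j] v) < ε := by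
  have : UniformEquicontinuous fun j : Fin (N + 1) => f^[j] :=
    uniformEquicontinuous_finite.2 fun j =>
      CompactSpace.uniformContinuous_of_continuous (hf.iterate j)
  obtain ⟨δ, hδ, H⟩ :=
    (uniformity_basis_edist.uniformEquicontinuous_iff uniformity_basis_edist).1 this ε hε
  exact ⟨δ, hδ, fun u v huv j hj => H u v huv ⟨j, by omega⟩⟩

section

variable {G X : Type*} [MetricSpace X] [Group G] [MulAction G X] {f : X → X} {x y : X}

theorem gLiYorkePair_iff : GLiYorkePair G f x y ↔
    (∀ ε > 0, ∃ᶠ n in atTop, ∃ g : G, edist (g • f^[n] x) (g • f^[n] y) < ε) ∧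
      ∃ δ > 0, ∃ᶠ n in atTop, ∃ g : G, δ ≤ edist (g • f^[n] x) (g • f^[n] y) := by
  refine ⟨fun ⟨g, hliminf, hlimsup⟩ => ⟨fun ε hε => ?_, ?_⟩, fun ⟨hsmall, hbig⟩ =>
    exists_liminf_eq_zero_and_pos_limsup _ hsmall hbig⟩
  · exact (frequently_lt_of_liminf_lt (by isBoundedDefault) (hliminf ▸ hε)).mono
      fun n hn => ⟨g n, hn⟩
  · obtain ⟨δ, hδ, hδlt⟩ := exists_between hlimsup
    exact ⟨δ, hδ, (frequently_lt_of_lt_limsup (by isBoundedDefault) hδlt).mono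
      fun n hn => ⟨g n, hn.le⟩⟩

theorem GLiYorkePair.iterate [CompactSpace X] (hf : Continuous f)
    (heq : ∀ (g : G) (x : X), f (g • x) = g • f x) {N : ℕ} (hN : 0 < N)
    (hxy : GLiYorkePair G f x y) : GLiYorkePair G f^[N] x y := by
  have hshift (j k : ℕ) (g : G) (z : X) : g • f^[j + k] z = f^[j] (g • f^[k] z) := by
    rw [Function.iterate_add_apply, (Function.Commute.iterate_left (heq g) j).eq]
  rw [gLiYorkePair_iff] at hxy ⊢
  simp only [← Function.iterate_mul]
  obtain ⟨hsmall, δ, hδ, hbig⟩ := hxy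
  refine ⟨fun ε hε => ?_, ?_⟩
  · obtain ⟨η, hη, hcont⟩ := exists_pos_forall_edist_iterate_lt hf N hε
    refine ((tendsto_add_atTop_nat 1).comp (Nat.tendsto_div_const_atTop hN.ne')).frequently_map
      _ (fun n ⟨g, hg⟩ => ⟨g, ?_⟩) (hsmall η hη)
    have hround : N * (n / N + 1) = (N - n % N) + n := by
      have := Nat.div_add_mod n N
      have := Nat.mod_lt n hN
      rw [Nat.mul_succ]
      omega
    rw [Function.comp_apply, hround, hshift, hshift]
    exact hcont _ _ hg _ (Nat.sub_le _ _)
  · obtain ⟨η, hη, hcont⟩ := exists_pos_forall_edist_iterate_lt hf N hδ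
    refine ⟨η, hη, (Nat.tendsto_div_const_atTop hN.ne').frequently_map
      _ (fun n ⟨g, hg⟩ => ⟨g, not_lt.1 fun hlt => hg.not_gt ?_⟩) hbig⟩
    rw [← Nat.mod_add_div n N, hshift, hshift]
    exact hcont _ _ hlt _ (Nat.mod_lt n hN).le

end

theorem gLiYorkeChaotic_iff_forall_iterate_general
    {X G : Type*} [MetricSpace X] [CompactSpace X]
    [Group G]
    [MulAction G X]
    (f : X → X) (hf : Continuous f)
    (heq : ∀ (g : G) (x : X), f (g • x) = g • f x) :
    GLiYorkeChaotic G f ↔ ∀ N : ℕ, 0 < N → GLiYorkeChaotic G (f^[N]) := by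
  refine ⟨fun ⟨S, hS, hpairs⟩ N hN => ⟨S, hS, fun x hx y hy hxy => ?_⟩, fun h => ?_⟩
  · exact (hpairs x hx y hy hxy).iterate hf heq hN
  · simpa using h 1 one_pos

/-- For a continuous equivariant map `f` on a compact metric G-space, `f` is chaotic in the
sense of G-Li-Yorke iff every iterate `f^N` (`N ≥ 1`) is chaotic in the sense of G-Li-Yorke. -/
theorem gLiYorkeChaotic_iff_forall_iterate
    {X G : Type*} [MetricSpace X] [CompactSpace X]
    [Group G] [TopologicalSpace G] [IsTopologicalGroup G]
    [MulAction G X] [ContinuousSMul G X]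
    (f : X → X) (hf : Continuous f)
    (heq : ∀ (g : G) (x : X), f (g • x) = g • f x) :
    GLiYorkeChaotic G f ↔ ∀ N : ℕ, 0 < N → GLiYorkeChaotic G (f^[N]) :=
  gLiYorkeChaotic_iff_forall_iterate_general f hf heq
end

section
/- Let (X,d) be a metric G-space and f : X → X a continuous equivariant map. Let (n_i)_{i≥0} be a sequence of positive integers, and let (A_i)_{i≥0} and (B_i)_{i≥0} be decreasing sequences of nonempty compact subsets of X with ⋂_{i≥0} A_i = {a} and ⋂_{i≥0} B_i = {b}, where a, b ∈ X and a ≠ b. If for every i ≥ 0 there exists g_{n_i} ∈ G such that A_{i+1} ∪ B_{i+1} ⊆ g_{n_i}·f^{n_i}(A_i) ∩ g_{n_i}·f^{n_i}(B_i), then f is chaotic in the sense of G-Li-Yorke. -/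
open Filter Topology

/-!
Every itinerary `s : ℕ → Bool` is realised, by nested compactness, by an orbit
`x (k + 1) = g k • f^[n k] (x k)` with `x k ∈ A k` or `x k ∈ B k` according to `s k`; by
equivariance `x k = u k • f^[N k] (x 0)` with `N k = n 0 + ⋯ + n (k - 1)`. As `A k` shrinks to
`a` and `B k` to `b ≠ a`, two starting points whose itineraries are simultaneously in `A`
infinitely often, and differ infinitely often, form a G-Li-Yorke pair. An interleaving of the
sequences `ℕ → Bool` provides uncountably many itineraries with these properties.
-/

open Function Set

section Itinerary

variable {X : Type*} [TopologicalSpace X] [T2Space X]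

theorem exists_seq_mem_of_subset_image {φ : ℕ → X → X} (hφ : ∀ k, Continuous (φ k))
    {D : ℕ → Set X} (hcpt : ∀ k, IsCompact (D k)) (hne : ∀ k, (D k).Nonempty)
    (hsub : ∀ k, D (k + 1) ⊆ φ k '' D k) :
    ∃ x : ℕ → X, (∀ k, x k ∈ D k) ∧ ∀ k, x (k + 1) = φ k (x k) := by
  classical
  have hfinite : ∀ k, ∀ z ∈ D k,
      ∃ x ∈ univ.pi D, x k = z ∧ ∀ j < k, x (j + 1) = φ j (x j) := by
    intro k
    induction k with
    | zero =>
      intro z hz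
      refine ⟨update (fun j => (hne j).some) 0 z, ?_, update_self .., by simp⟩
      exact update_mem_pi_iff.2 ⟨fun j _ => (hne j).some_mem, fun _ => hz⟩
    | succ k ih =>
      intro z hz
      obtain ⟨_, hy, rfl⟩ := hsub k hz
      obtain ⟨x, hxD, rfl, hx⟩ := ih _ hy
      refine ⟨update x (k + 1) (φ k (x k)), ?_, update_self .., fun j hj => ?_⟩
      · exact update_mem_pi_iff.2 ⟨fun j hj => hxD j hj.1, fun _ => hz⟩
      · rcases Nat.lt_succ_iff_lt_or_eq.1 hj with hj | rfl
        · rw [update_of_ne (by omega), update_of_ne (by omega), hx j hj]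
        · rw [update_self, update_of_ne (by omega)]
  -- finite intersection property in the compact product `∏ k, D k` (Tychonoff)
  obtain ⟨x, hxD, hx⟩ := (isCompact_univ_pi hcpt).inter_iInter_nonempty
    (fun j => {x : ℕ → X | x (j + 1) = φ j (x j)})
    (fun j => isClosed_eq (continuous_apply _) ((hφ j).comp (continuous_apply j))) fun u => by
      obtain ⟨x, hxD, -, hx⟩ := hfinite (u.sup id + 1) _ (hne _).some_mem
      exact ⟨x, hxD, mem_iInter₂.2 fun j hj => hx j (Nat.lt_succ_of_le (u.le_sup (f := id) hj))⟩
  exact ⟨x, fun k => hxD k trivial, mem_iInter.1 hx⟩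

theorem exists_seq_mem_cond_of_subset_image {φ : ℕ → X → X} (hφ : ∀ k, Continuous (φ k))
    {A B : ℕ → Set X} (hAcpt : ∀ k, IsCompact (A k)) (hBcpt : ∀ k, IsCompact (B k))
    (hAne : ∀ k, (A k).Nonempty) (hBne : ∀ k, (B k).Nonempty)
    (hsub : ∀ k, A (k + 1) ∪ B (k + 1) ⊆ φ k '' A k ∩ φ k '' B k) (s : ℕ → Bool) :
    ∃ x : ℕ → X, (∀ k, x k ∈ cond (s k) (B k) (A k)) ∧ ∀ k, x (k + 1) = φ k (x k) := by
  refine exists_seq_mem_of_subset_image hφ (fun k => ?_) (fun k => ?_) fun k => ?_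
  · cases s k
    exacts [hAcpt k, hBcpt k]
  · cases s k
    exacts [hAne k, hBne k]
  · have hunion : cond (s (k + 1)) (B (k + 1)) (A (k + 1)) ⊆ A (k + 1) ∪ B (k + 1) := by
      cases s (k + 1)
      exacts [subset_union_left, subset_union_right]
    refine hunion.trans ((hsub k).trans ?_)
    cases s k
    exacts [inter_subset_left, inter_subset_right]

theorem tendsto_smallSets_nhds_of_iInter_eq_singleton {ι : Type*} [Preorder ι]
    [IsDirected ι (· ≤ ·)] [Nonempty ι] {A : ι → Set X} {a : X}
    (hcpt : ∀ i, IsCompact (A i)) (hA : Antitone A) (hAa : ⋂ i, A i = {a}) :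
    Tendsto A atTop (𝓝 a).smallSets := by
  refine tendsto_smallSets_iff.2 fun U hU => ?_
  obtain ⟨i, hi⟩ := exists_subset_nhds_of_isCompact hA.directed_ge hcpt
    (by rw [hAa]; rintro _ rfl; exact hU)
  exact eventually_atTop.2 ⟨i, fun j hj => (hA hj).trans hi⟩

end Itinerary

section Metric

variable {X ι : Type*} [PseudoMetricSpace X] {l : Filter ι} {A B : ι → Set X} {a b : X}

theorem eventually_forall_dist_lt (hA : Tendsto A l (𝓝 a).smallSets) {ε : ℝ} (hε : 0 < ε) :
    ∀ᶠ k in l, ∀ p ∈ A k, ∀ q ∈ A k, dist p q < ε := by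
  filter_upwards [tendsto_smallSets_iff.1 hA _ (Metric.ball_mem_nhds a (half_pos hε))]
    with k hk p hp q hq
  calc dist p q ≤ dist p a + dist q a := dist_triangle_right p q a
    _ < ε / 2 + ε / 2 := add_lt_add (hk hp) (hk hq)
    _ = ε := add_halves ε

theorem eventually_forall_le_dist (hA : Tendsto A l (𝓝 a).smallSets)
    (hB : Tendsto B l (𝓝 b).smallSets) (hab : 0 < dist a b) :
    ∀ᶠ k in l, ∀ p ∈ A k, ∀ q ∈ B k, dist a b / 3 ≤ dist p q := by
  have hδ : 0 < dist a b / 3 := by positivity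
  filter_upwards [tendsto_smallSets_iff.1 hA _ (Metric.ball_mem_nhds a hδ),
    tendsto_smallSets_iff.1 hB _ (Metric.ball_mem_nhds b hδ)] with k hkA hkB p hp q hq
  have hpa : dist a p < dist a b / 3 := by rw [dist_comm]; exact hkA hp
  have hqb : dist q b < dist a b / 3 := hkB hq
  linarith [dist_triangle4 a p q b]

theorem eventually_forall_le_dist_cond (hA : Tendsto A l (𝓝 a).smallSets)
    (hB : Tendsto B l (𝓝 b).smallSets) (hab : 0 < dist a b) :
    ∀ᶠ k in l, ∀ i j : Bool, i ≠ j →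
      ∀ p ∈ cond i (B k) (A k), ∀ q ∈ cond j (B k) (A k), dist a b / 3 ≤ dist p q := by
  filter_upwards [eventually_forall_le_dist hA hB hab] with k hk
  rintro (_ | _) (_ | _) hij p hp q hq
  · exact absurd rfl hij
  · exact hk p hp q hq
  · rw [dist_comm p q]
    exact hk q hq p hp
  · exact absurd rfl hij

end Metric

section GLiYorke

variable {G X : Type*} [MetricSpace X] [Group G] [MulAction G X] {f : X → X}

theorem GLiYorkePair.ne {x y : X} (h : GLiYorkePair G f x y) : x ≠ y := by
  rintro rfl
  obtain ⟨g, -, hpos⟩ := h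
  simp at hpos

theorem gLiYorkeChaotic_of_pairwise {ι : Type*} [Uncountable ι] {F : ι → X}
    (hF : Pairwise fun i j => GLiYorkePair G f (F i) (F j)) : GLiYorkeChaotic G f := by
  have hinj : Injective F := fun i j hij => by_contra fun hne => (hF hne).ne hij
  refine ⟨range F, fun hc => not_countable_univ (by simpa using hc.preimage hinj), ?_⟩
  rintro _ ⟨i, rfl⟩ _ ⟨j, rfl⟩ hne
  exact hF (ne_of_apply_ne F hne)

theorem gLiYorkePair_of_frequently {x y : X} {N : ℕ → ℕ} (hN : StrictMono N) (u : ℕ → G)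
    (hnear : ∀ ε > 0, ∃ᶠ k in atTop, dist (u k • f^[N k] x) (u k • f^[N k] y) < ε)
    (hfar : ∃ δ > 0, ∃ᶠ k in atTop, δ ≤ dist (u k • f^[N k] x) (u k • f^[N k] y)) :
    GLiYorkePair G f x y := by
  have hext : ∀ k, edist (extend N u 1 (N k) • f^[N k] x) (extend N u 1 (N k) • f^[N k] y) =
      ENNReal.ofReal (dist (u k • f^[N k] x) (u k • f^[N k] y)) := fun k => by
    rw [hN.injective.extend_apply, edist_dist]
  refine ⟨extend N u 1, le_antisymm (ENNReal.le_of_forall_pos_le_add fun ε hε _ => ?_) bot_le, ?_⟩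
  · rw [zero_add]
    refine liminf_le_of_frequently_le'
      (hN.tendsto_atTop.frequently ((hnear ε hε).mono fun k hk => ?_))
    rw [hext, ← ENNReal.ofReal_coe_nnreal]
    exact ENNReal.ofReal_le_ofReal hk.le
  · obtain ⟨δ, hδ, hfreq⟩ := hfar
    refine (ENNReal.ofReal_pos.2 hδ).trans_le (le_limsup_of_frequently_le'
      (hN.tendsto_atTop.frequently (hfreq.mono fun k hk => ?_)))
    rw [hext]
    exact ENNReal.ofReal_le_ofReal hk

end GLiYorke

theorem exists_eq_smul_iterate_sum_range {G X : Type*} [Monoid G] [MulAction G X] {f : X → X}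
    (heq : ∀ (g : G) (x : X), f (g • x) = g • f x) (g : ℕ → G) (n : ℕ → ℕ) :
    ∃ u : ℕ → G, ∀ x : ℕ → X, (∀ k, x (k + 1) = g k • f^[n k] (x k)) →
      ∀ k, x k = u k • f^[∑ i ∈ Finset.range k, n i] (x 0) := by
  refine ⟨fun k => Nat.rec 1 (fun k v => g k * v) k, fun x hx k => ?_⟩
  induction k with
  | zero => simp
  | succ k ih =>
    rw [hx, ih, (Commute.iterate_left (heq _) (n k)), smul_smul, Finset.sum_range_succ,
      add_comm _ (n k), iterate_add_apply]

instance : Uncountable (ℕ → Bool) := by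
  rw [← Cardinal.aleph0_lt_mk_iff]
  simpa using Cardinal.cantor Cardinal.aleph0

def scrambleCode (r : ℕ → Bool) (k : ℕ) : Bool :=
  match k.unpair.1 with
  | 0 => false
  | m + 1 => r m

theorem frequently_forall_scrambleCode_eq_false :
    ∃ᶠ k in atTop, ∀ r, scrambleCode r k = false :=
  frequently_atTop.2 fun t =>
    ⟨Nat.pair 0 t, Nat.right_le_pair 0 t, fun r => by simp [scrambleCode]⟩

theorem frequently_forall_scrambleCode_eq (m : ℕ) :
    ∃ᶠ k in atTop, ∀ r, scrambleCode r k = r m :=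
  frequently_atTop.2 fun t =>
    ⟨Nat.pair (m + 1) t, Nat.right_le_pair _ t, fun r => by simp [scrambleCode]⟩

theorem gLiYorkeChaotic_of_nested_compacts_general
    {X G : Type*} [MetricSpace X]
    [Group G] [TopologicalSpace G]
    [MulAction G X] [ContinuousSMul G X]
    (f : X → X) (hf : Continuous f)
    (heq : ∀ (g : G) (x : X), f (g • x) = g • f x)
    (n : ℕ → ℕ) (hn : ∀ i, 0 < n i)
    (A B : ℕ → Set X)
    (hAcpt : ∀ i, IsCompact (A i)) (hBcpt : ∀ i, IsCompact (B i))
    (hAdec : ∀ i, A (i + 1) ⊆ A i) (hBdec : ∀ i, B (i + 1) ⊆ B i)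
    (a b : X) (hab : a ≠ b)
    (hAa : ⋂ i, A i = {a}) (hBb : ⋂ i, B i = {b})
    (hstep : ∀ i, ∃ g : G,
      A (i + 1) ∪ B (i + 1) ⊆
        ((fun x => g • f^[n i] x) '' A i) ∩ ((fun x => g • f^[n i] x) '' B i)) :
    GLiYorkeChaotic G f := by
  choose g hg using hstep
  obtain ⟨u, hu⟩ := exists_eq_smul_iterate_sum_range heq g n
  have hN : StrictMono fun k => ∑ i ∈ Finset.range k, n i :=
    strictMono_nat_of_lt_succ fun k => by simpa [Finset.sum_range_succ] using hn k
  choose x hxD hxsucc using exists_seq_mem_cond_of_subset_image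
    (fun k => (hf.iterate (n k)).const_smul (g k)) hAcpt hBcpt
    (fun k => ⟨a, mem_iInter.1 (hAa.ge rfl) k⟩) (fun k => ⟨b, mem_iInter.1 (hBb.ge rfl) k⟩) hg
  have hA := tendsto_smallSets_nhds_of_iInter_eq_singleton hAcpt
    (antitone_nat_of_succ_le hAdec) hAa
  have hB := tendsto_smallSets_nhds_of_iInter_eq_singleton hBcpt
    (antitone_nat_of_succ_le hBdec) hBb
  have hdist : 0 < dist a b := dist_pos.2 hab
  refine gLiYorkeChaotic_of_pairwise (F := fun r => x (scrambleCode r) 0) fun r r' hrr' =>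
    gLiYorkePair_of_frequently hN u (fun ε hε => ?_) ⟨dist a b / 3, by positivity, ?_⟩
  · refine (frequently_forall_scrambleCode_eq_false.and_eventually
      (eventually_forall_dist_lt hA hε)).mono fun k ⟨hcode, hk⟩ => ?_
    rw [← hu _ (hxsucc _), ← hu _ (hxsucc _)]
    exact hk _ (by simpa [hcode] using hxD (scrambleCode r) k) _
      (by simpa [hcode] using hxD (scrambleCode r') k)
  · obtain ⟨m, hm⟩ := Function.ne_iff.1 hrr'
    refine ((frequently_forall_scrambleCode_eq m).and_eventually
      (eventually_forall_le_dist_cond hA hB hdist)).mono fun k ⟨hcode, hk⟩ => ?_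
    rw [← hu _ (hxsucc _), ← hu _ (hxsucc _)]
    exact hk _ _ hm _ (hcode r ▸ hxD _ k) _ (hcode r' ▸ hxD _ k)

/-- A sufficient condition for G-Li-Yorke chaos: if there are decreasing sequences of nonempty
compact sets `Aᵢ`, `Bᵢ` shrinking to two distinct points `a ≠ b`, a sequence of positive
integers `nᵢ` and group elements `g_{nᵢ}` with
`A_{i+1} ∪ B_{i+1} ⊆ g_{nᵢ}·f^{nᵢ}(Aᵢ) ∩ g_{nᵢ}·f^{nᵢ}(Bᵢ)`, then the continuous
equivariant map `f` is chaotic in the sense of G-Li-Yorke. -/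
theorem gLiYorkeChaotic_of_nested_compacts
    {X G : Type*} [MetricSpace X]
    [Group G] [TopologicalSpace G] [IsTopologicalGroup G]
    [MulAction G X] [ContinuousSMul G X]
    (f : X → X) (hf : Continuous f)
    (heq : ∀ (g : G) (x : X), f (g • x) = g • f x)
    (n : ℕ → ℕ) (hn : ∀ i, 0 < n i)
    (A B : ℕ → Set X)
    (hAcpt : ∀ i, IsCompact (A i)) (hBcpt : ∀ i, IsCompact (B i))
    (hAne : ∀ i, (A i).Nonempty) (hBne : ∀ i, (B i).Nonempty)
    (hAdec : ∀ i, A (i + 1) ⊆ A i) (hBdec : ∀ i, B (i + 1) ⊆ B i)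
    (a b : X) (hab : a ≠ b)
    (hAa : ⋂ i, A i = {a}) (hBb : ⋂ i, B i = {b})
    (hstep : ∀ i, ∃ g : G,
      A (i + 1) ∪ B (i + 1) ⊆
        ((fun x => g • f^[n i] x) '' A i) ∩ ((fun x => g • f^[n i] x) '' B i)) :
    GLiYorkeChaotic G f :=
  gLiYorkeChaotic_of_nested_compacts_general f hf heq n hn A B hAcpt hBcpt hAdec hBdec a b hab hAa
    hBb hstep
end

section
/- Let (X,d) be a metric G-space and f : X → X a continuous map. If the set R_G(f) of G-recurrent points of f is dense in X, then R_G(f) is a dense G_δ subset of X. -/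
/-!
A point is `G`-recurrent exactly when it lies in the closure of its own positive `G`-orbit
`{g • f^[n] x | n > 0, g ∈ G}`. For any family of continuous self-maps `φᵢ`, the points `x` in
the closure of `{φᵢ x}` form the Gδ set `⋂ₖ ⋃ᵢ {x | dist x (φᵢ x) < 1 / (k + 1)}`, and the maps
`x ↦ g • f^[n] x` are continuous.
-/

open Filter Topology

/-- `x` is a G-recurrent point of `f`: there exist a sequence `(gᵢ)` in `G` and a sequence
`(nᵢ)` of positive integers with `gᵢ • f^[nᵢ] x → x`. -/
def GRecurrentPt (G : Type*) {X : Type*} [MetricSpace X] [Group G] [MulAction G X]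
    (f : X → X) (x : X) : Prop :=
  ∃ (g : ℕ → G) (n : ℕ → ℕ), (∀ i, 0 < n i) ∧
    Tendsto (fun i => g i • f^[n i] x) atTop (𝓝 x)

open Set

theorem mem_closure_range_iff_exists_seq_tendsto {X ι : Type*} [TopologicalSpace X]
    [FrechetUrysohnSpace X] {e : ι → X} {a : X} :
    a ∈ closure (range e) ↔ ∃ k : ℕ → ι, Tendsto (e ∘ k) atTop (𝓝 a) := by
  rw [mem_closure_iff_seq_limit]
  constructor
  · rintro ⟨u, hu, hlim⟩
    choose k hk using hu
    exact ⟨k, by simpa only [Function.comp_def, hk] using hlim⟩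
  · rintro ⟨k, hk⟩
    exact ⟨e ∘ k, fun n => mem_range_self _, hk⟩

theorem isGδ_setOf_mem_closure_range {X ι : Type*} [PseudoMetricSpace X] {φ : ι → X → X}
    (hφ : ∀ i, Continuous (φ i)) : IsGδ {x | x ∈ closure (range fun i => φ i x)} := by
  have hrepr : {x | x ∈ closure (range fun i => φ i x)} =
      ⋂ n : ℕ, ⋃ i, {x | dist x (φ i x) < 1 / ((n : ℝ) + 1)} := by
    ext x
    simp only [mem_ofPred_eq, Metric.mem_closure_range_iff_nat, mem_iInter, mem_iUnion]
  rw [hrepr]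
  exact .iInter fun n =>
    (isOpen_iUnion fun i => isOpen_lt (continuous_id.dist (hφ i)) continuous_const).isGδ

theorem gRecurrentPt_iff_mem_closure {X G : Type*} [MetricSpace X] [Group G] [MulAction G X]
    {f : X → X} {x : X} :
    GRecurrentPt G f x ↔ x ∈ closure (range fun p : ℕ+ × G => p.2 • f^[p.1] x) := by
  rw [mem_closure_range_iff_exists_seq_tendsto]
  constructor
  · rintro ⟨g, n, hn, hlim⟩
    exact ⟨fun i => (⟨n i, hn i⟩, g i), hlim⟩
  · rintro ⟨k, hlim⟩
    exact ⟨fun i => (k i).2, fun i => (k i).1, fun i => (k i).1.pos, hlim⟩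

theorem gRecurrent_dense_Gdelta_general
    {X G : Type*} [MetricSpace X]
    [Group G] [TopologicalSpace G]
    [MulAction G X] [ContinuousSMul G X]
    (f : X → X) (hf : Continuous f)
    (hdense : Dense {x : X | GRecurrentPt G f x}) :
    IsGδ {x : X | GRecurrentPt G f x} ∧ Dense {x : X | GRecurrentPt G f x} := by
  have horbit : {x : X | GRecurrentPt G f x} =
      {x | x ∈ closure (range fun p : ℕ+ × G => p.2 • f^[p.1] x)} :=
    ext fun _ => gRecurrentPt_iff_mem_closure
  rw [horbit] at hdense ⊢
  exact ⟨isGδ_setOf_mem_closure_range fun p => (continuous_const_smul p.2).comp (hf.iterate p.1),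
    hdense⟩

/-- If the set of G-recurrent points of a continuous map `f` on a metric G-space is dense,
then it is a dense Gδ set. -/
theorem gRecurrent_dense_Gdelta
    {X G : Type*} [MetricSpace X]
    [Group G] [TopologicalSpace G] [IsTopologicalGroup G]
    [MulAction G X] [ContinuousSMul G X]
    (f : X → X) (hf : Continuous f)
    (hdense : Dense {x : X | GRecurrentPt G f x}) :
    IsGδ {x : X | GRecurrentPt G f x} ∧ Dense {x : X | GRecurrentPt G f x} :=
  gRecurrent_dense_Gdelta_general f hf hdense
end
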